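/- Let γ₀(x) = 1 + ∫_{-∞}^x (1+y²)^{-(1+ε)/2} dy. For ε > 0 sufficiently small, γ₀ is smooth, increasing, bounded, and satisfies γ₀''' ≤ (2/3) γ₀' on ℝ. -/

import Mathlib

open MeasureTheory

/-- The local smoothing weight `γ₀(x) = 1 + ∫_{-∞}^x (1+y²)^{-(1+ε)/2} dy`. -/
noncomputable def gamma0 (ε : ℝ) (x : ℝ) : ℝ :=
  1 + ∫ y in Set.Iic x, (1 + y ^ 2) ^ (-((1 + ε) / 2))

lemma g0_base_pos (y : ℝ) : (0:ℝ) < 1 + y ^ 2 := by positivity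

lemma g0_integrable {ε : ℝ} (hε : 0 < ε) :
    Integrable (fun y : ℝ => (1 + y ^ 2) ^ (-((1 + ε) / 2))) := by
  have h := integrable_rpow_neg_one_add_norm_sq (E := ℝ) (μ := volume) (r := 1 + ε)
    (by simp; linarith)
  have h2 : (fun x : ℝ => ((1:ℝ) + ‖x‖ ^ 2) ^ (-(1 + ε) / 2)) =
      fun y : ℝ => (1 + y ^ 2) ^ (-((1 + ε) / 2)) := by
    funext x; rw [Real.norm_eq_abs, sq_abs, neg_div]
  rwa [h2] at h

lemma g0_cont {ε : ℝ} : Continuous (fun y : ℝ => (1 + y ^ 2) ^ (-((1 + ε) / 2))) :=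
  Continuous.rpow_const (by continuity) fun y => Or.inl (g0_base_pos y).ne'

lemma g0_hasDerivAt {ε : ℝ} (hε : 0 < ε) (x : ℝ) :
    HasDerivAt (gamma0 ε) ((1 + x ^ 2) ^ (-((1 + ε) / 2))) x := by
  set f : ℝ → ℝ := fun y => (1 + y ^ 2) ^ (-((1 + ε) / 2)) with hf
  have hint := g0_integrable hε
  have key : ∀ z : ℝ, gamma0 ε z = (1 + ∫ y in Set.Iic (0:ℝ), f y) + ∫ y in (0:ℝ)..z, f y := by
    intro z
    rw [← intervalIntegral.integral_Iic_sub_Iic hint.integrableOn hint.integrableOn]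
    simp only [gamma0, hf]
    ring
  have hD : HasDerivAt (fun z => (1 + ∫ y in Set.Iic (0:ℝ), f y) + ∫ y in (0:ℝ)..z, f y)
      (f x) x := by
    exact (intervalIntegral.integral_hasDerivAt_right hint.intervalIntegrable
      g0_cont.stronglyMeasurable.stronglyMeasurableAtFilter g0_cont.continuousAt).const_add _
  exact (funext key ▸ hD : HasDerivAt (gamma0 ε) (f x) x)

lemma g0_f_hasDerivAt (ε y : ℝ) :
    HasDerivAt (fun y : ℝ => (1 + y ^ 2) ^ (-((1 + ε) / 2)))
      (2 * y * (-((1 + ε) / 2)) * (1 + y ^ 2) ^ (-((1 + ε) / 2) - 1)) y := by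
  have h1 : HasDerivAt (fun y : ℝ => 1 + y ^ 2) (2 * y) y := by
    simpa using (hasDerivAt_pow 2 y).const_add 1
  exact h1.rpow_const (Or.inl (g0_base_pos y).ne')

lemma g0_f1_hasDerivAt (ε y : ℝ) :
    HasDerivAt (fun y : ℝ => 2 * y * (-((1 + ε) / 2)) * (1 + y ^ 2) ^ (-((1 + ε) / 2) - 1))
      (2 * (-((1 + ε) / 2)) * (1 + y ^ 2) ^ (-((1 + ε) / 2) - 1)
        + 4 * y ^ 2 * (-((1 + ε) / 2)) * (-((1 + ε) / 2) - 1)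
          * (1 + y ^ 2) ^ (-((1 + ε) / 2) - 1 - 1)) y := by
  have h1 : HasDerivAt (fun y : ℝ => 1 + y ^ 2) (2 * y) y := by
    simpa using (hasDerivAt_pow 2 y).const_add 1
  have h2 : HasDerivAt (fun y : ℝ => (1 + y ^ 2) ^ (-((1 + ε) / 2) - 1))
      (2 * y * (-((1 + ε) / 2) - 1) * (1 + y ^ 2) ^ (-((1 + ε) / 2) - 1 - 1)) y :=
    h1.rpow_const (Or.inl (g0_base_pos y).ne')
  have h3 : HasDerivAt (fun y : ℝ => 2 * y * (-((1 + ε) / 2))) (2 * (-((1 + ε) / 2))) y := by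
    simpa using ((hasDerivAt_id y).const_mul 2).mul_const (-((1 + ε) / 2))
  have := h3.mul h2
  exact this.congr_deriv (by ring)

/-- A real function whose derivative is analytic at a point is itself analytic there. -/
lemma analyticAt_primitive {f g : ℝ → ℝ} {x₀ : ℝ}
    (hf : AnalyticAt ℝ f x₀) (hg : ∀ y, HasDerivAt g (f y) y) :
    AnalyticAt ℝ g x₀ := by
  obtain ⟨p, hpa⟩ := hf
  obtain ⟨r, hp⟩ := hpa
  obtain ⟨r', hr'0, hr'⟩ := ENNReal.lt_iff_exists_nnreal_btwn.mp hp.r_pos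
  have hr'pos : (0:ℝ) < r' := by exact_mod_cast hr'0
  set a : ℕ → ℝ := fun n => p.coeff n with ha
  set b : ℕ → ℝ := fun n => Nat.rec (g x₀) (fun k _ => a k / (k + 1)) n with hb
  have hb0 : b 0 = g x₀ := rfl
  have hbs : ∀ n : ℕ, b (n + 1) = a n / (n + 1) := fun n => rfl
  have hSa : Summable (fun n => ‖a n‖ * (r' : ℝ) ^ n) := by
    have := p.summable_norm_mul_pow (lt_of_lt_of_le hr' hp.r_le)
    simpa [FormalMultilinearSeries.norm_apply_eq_norm_coef] using this
  -- the summable bound on derivatives of the terms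
  set u : ℕ → ℝ := fun n => (n : ℝ) * ‖b n‖ * (r' : ℝ) ^ (n - 1) with hu
  have hu_eq : ∀ n : ℕ, u (n + 1) = ‖a n‖ * (r' : ℝ) ^ n := by
    intro n
    have hne : ((n : ℝ) + 1) ≠ 0 := by positivity
    simp only [hu, hbs, Nat.cast_add, Nat.cast_one, Nat.add_sub_cancel]
    rw [norm_div, Real.norm_eq_abs ((n : ℝ) + 1), abs_of_pos (by positivity)]
    field_simp
  have hu_sum : Summable u := by
    rw [← summable_nat_add_iff 1]
    exact (funext hu_eq : (fun n => u (n + 1)) = _) ▸ hSa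
  set B : Set ℝ := Metric.ball x₀ (r' : ℝ) with hB
  -- the terms and their derivatives
  have hterm : ∀ (n : ℕ) (z : ℝ),
      HasDerivAt (fun w => b n * (w - x₀) ^ n) ((n : ℝ) * b n * (z - x₀) ^ (n - 1)) z := by
    intro n z
    have h1 : HasDerivAt (fun w : ℝ => w - x₀) 1 z := (hasDerivAt_id z).sub_const x₀
    have := (h1.pow n).const_mul (b n)
    exact this.congr_deriv (by ring)
  have hbound : ∀ (n : ℕ) (z : ℝ), z ∈ B → ‖(n : ℝ) * b n * (z - x₀) ^ (n - 1)‖ ≤ u n := by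
    intro n z hz
    have hz' : |z - x₀| < (r' : ℝ) := by
      rw [← Real.dist_eq]; exact Metric.mem_ball.mp hz
    have h1 : ‖(z - x₀) ^ (n - 1)‖ ≤ (r' : ℝ) ^ (n - 1) := by
      rw [norm_pow, Real.norm_eq_abs]
      exact pow_le_pow_left₀ (abs_nonneg _) hz'.le _
    calc ‖(n : ℝ) * b n * (z - x₀) ^ (n - 1)‖
        = (n : ℝ) * ‖b n‖ * ‖(z - x₀) ^ (n - 1)‖ := by
          rw [norm_mul, norm_mul, Real.norm_natCast]
      _ ≤ (n : ℝ) * ‖b n‖ * (r' : ℝ) ^ (n - 1) :=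
          mul_le_mul_of_nonneg_left h1 (by positivity)
  have hsum0 : Summable (fun n => b n * (x₀ - x₀) ^ n) := by
    apply summable_of_ne_finset_zero (s := {0})
    intro n hn
    have : n ≠ 0 := by simpa using hn
    simp [zero_pow this]
  have hx₀B : x₀ ∈ B := Metric.mem_ball_self hr'pos
  -- the sum function
  set S : ℝ → ℝ := fun z => ∑' n, b n * (z - x₀) ^ n with hS
  have hSderiv : ∀ z ∈ B, HasDerivAt S (∑' n : ℕ, (n : ℝ) * b n * (z - x₀) ^ (n - 1)) z := by
    intro z hz
    exact hasDerivAt_tsum_of_isPreconnected hu_sum Metric.isOpen_ball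
      (convex_ball x₀ (r' : ℝ)).isPreconnected (fun n y _ => hterm n y) hbound hx₀B hsum0 hz
  have hSd_eq : ∀ z ∈ B, (∑' n : ℕ, (n : ℝ) * b n * (z - x₀) ^ (n - 1)) = f z := by
    intro z hz
    have hz' : |z - x₀| < (r' : ℝ) := by
      rw [← Real.dist_eq]; exact Metric.mem_ball.mp hz
    have hmem : (z - x₀) ∈ Metric.eball (0 : ℝ) r := by
      rw [mem_emetric_ball_zero_iff]
      calc (‖z - x₀‖₊ : ENNReal) < (r' : ENNReal) := by
            rw [ENNReal.coe_lt_coe, ← NNReal.coe_lt_coe, coe_nnnorm, Real.norm_eq_abs]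
            exact hz'
        _ < r := hr'
    have hfs : HasSum (fun n => a n * (z - x₀) ^ n) (f z) := by
      have := hp.hasSum hmem
      simp only [FormalMultilinearSeries.apply_eq_pow_smul_coeff, smul_eq_mul] at this
      have h2 : f (x₀ + (z - x₀)) = f z := by ring_nf
      rw [h2] at this
      have e : (fun n => a n * (z - x₀) ^ n) = fun n => (z - x₀) ^ n * p.coeff n :=
        funext fun n => by ring
      rw [e]; exact this
    have hd_summable : Summable (fun n : ℕ => (n : ℝ) * b n * (z - x₀) ^ (n - 1)) :=
      Summable.of_norm_bounded hu_sum (fun n => hbound n z hz)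
    rw [Summable.tsum_eq_zero_add hd_summable]
    have hz1 : ∀ n : ℕ, ((n : ℝ) + 1) * b (n + 1) * (z - x₀) ^ n = a n * (z - x₀) ^ n := by
      intro n
      rw [hbs n]
      have hne : ((n : ℝ) + 1) ≠ 0 := by positivity
      field_simp
    simp only [Nat.cast_zero, zero_mul, Nat.cast_add, Nat.cast_one, Nat.add_sub_cancel]
    rw [tsum_congr hz1, hfs.tsum_eq]
    ring
  -- g and S agree on the ball
  have hSx₀ : S x₀ = g x₀ := by
    rw [hS]
    simp only [sub_self]
    rw [tsum_eq_single 0 (fun n hn => by simp [zero_pow hn])]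
    simp [hb0]
  have hagree : ∀ z ∈ B, g z = S z := by
    intro z hz
    have hGd : ∀ w ∈ B, HasDerivWithinAt (fun y => g y - S y) 0 B w := by
      intro w hw
      have := (hg w).sub (hSd_eq w hw ▸ hSderiv w hw)
      exact this.hasDerivWithinAt.congr_deriv (sub_self _)
    have h3 : ‖(g z - S z) - (g x₀ - S x₀)‖ ≤ 0 * ‖z - x₀‖ :=
      (convex_ball x₀ (r' : ℝ)).norm_image_sub_le_of_norm_hasDerivWithin_le
        (f' := fun _ => (0:ℝ)) (C := 0) (fun w hw => hGd w hw) (fun w _ => by simp) hx₀B hz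
    rw [zero_mul] at h3
    have h4 := sub_eq_zero.mp (norm_le_zero_iff.mp h3)
    rw [hSx₀] at h4
    linarith
  -- S is analytic at x₀ via the formal power series with coefficients b
  set q : FormalMultilinearSeries ℝ ℝ ℝ := FormalMultilinearSeries.ofScalars ℝ b with hq
  have hqnorm : ∀ n, ‖q n‖ = ‖b n‖ := fun n => FormalMultilinearSeries.ofScalars_norm ℝ b n
  have hqb : Summable (fun n => ‖q n‖ * (r' : ℝ) ^ n) := by
    simp only [hqnorm]
    rw [← summable_nat_add_iff 1]
    refine Summable.of_nonneg_of_le (fun n => by positivity) ?_ (hSa.mul_left ((r' : ℝ)))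
    intro n
    rw [hbs n, pow_succ]
    have hne : (0:ℝ) < (n : ℝ) + 1 := by positivity
    rw [norm_div, Real.norm_eq_abs ((n:ℝ) + 1), abs_of_pos hne]
    rw [div_mul_eq_mul_div]
    rw [div_le_iff₀ hne]
    nlinarith [mul_nonneg (mul_nonneg (norm_nonneg (a n))
        (pow_nonneg (NNReal.coe_nonneg r') n)) (NNReal.coe_nonneg r'),
      Nat.cast_nonneg (α := ℝ) n]
  have hqrad : 0 < q.radius := lt_of_lt_of_le hr'0 (q.le_radius_of_summable hqb)
  have hQ : HasFPowerSeriesOnBall q.sum q 0 q.radius := q.hasFPowerSeriesOnBall hqrad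
  have hsum_eq : ∀ w : ℝ, q.sum w = ∑' n, b n * w ^ n := by
    intro w
    have h1 : q.sum w = ∑' n : ℕ, q n fun _ => w := rfl
    rw [h1]
    exact tsum_congr fun n => by
      rw [hq, FormalMultilinearSeries.ofScalars_apply_eq, smul_eq_mul, mul_comm]
  have hS0 : AnalyticAt ℝ q.sum 0 := hQ.analyticAt
  have hinner : AnalyticAt ℝ (fun z : ℝ => z - x₀) x₀ := by
    exact (analyticAt_id (𝕜 := ℝ) (z := x₀)).sub analyticAt_const
  have hshift : AnalyticAt ℝ (fun z : ℝ => q.sum (z - x₀)) x₀ := by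
    exact AnalyticAt.comp (f := fun z : ℝ => z - x₀) (by simpa using hS0) hinner
  apply hshift.congr
  have hmem : B ∈ nhds x₀ := Metric.isOpen_ball.mem_nhds hx₀B
  filter_upwards [hmem] with z hz
  rw [hsum_eq, hagree z hz]

/-- The density `(1+y²)^{-(1+ε)/2}` is real analytic at every point. -/
lemma g0_f_analytic (ε : ℝ) (x : ℝ) :
    AnalyticAt ℝ (fun y : ℝ => (1 + y ^ 2) ^ (-((1 + ε) / 2))) x := by
  set c : ℝ := -((1 + ε) / 2) with hc
  have hF : AnalyticAt ℂ (fun w : ℂ => (1 + w ^ 2) ^ (c : ℂ)) (x : ℂ) := by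
    apply AnalyticAt.cpow
    · exact analyticAt_const.add ((analyticAt_id (𝕜 := ℂ) (z := (x:ℂ))).pow 2)
    · exact analyticAt_const
    · have h1 : (1 + (x:ℂ) ^ 2) = ((1 + x ^ 2 : ℝ) : ℂ) := by push_cast; ring
      rw [h1, Complex.ofReal_mem_slitPlane]
      exact g0_base_pos x
  have h2 : AnalyticAt ℝ (fun y : ℝ => (1 + (y:ℂ) ^ 2) ^ (c : ℂ)) x := by
    have h3 := hF.restrictScalars (𝕜 := ℝ)
    have h4 : AnalyticAt ℝ (⇑Complex.ofRealCLM) x := Complex.ofRealCLM.analyticAt x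
    exact h3.comp h4
  have h5 : AnalyticAt ℝ (fun y : ℝ => ((1 + (y:ℂ) ^ 2) ^ (c : ℂ)).re) x :=
    (Complex.reCLM.analyticAt _).comp h2
  apply h5.congr
  apply Filter.Eventually.of_forall
  intro y
  show ((1 + (y:ℂ) ^ 2) ^ (c : ℂ)).re = (1 + y ^ 2) ^ c
  have h6 : (1 + (y:ℂ) ^ 2) = ((1 + y ^ 2 : ℝ) : ℂ) := by push_cast; ring
  rw [h6, ← Complex.ofReal_cpow (g0_base_pos y).le]
  simp

/-- For `ε > 0` sufficiently small, `γ₀` is smooth, increasing, bounded, and satisfies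
`γ₀''' ≤ (2/3) γ₀'` on `ℝ`. -/
theorem gamma0_properties :
    ∃ ε₀ > 0, ∀ ε : ℝ, 0 < ε → ε ≤ ε₀ →
      ContDiff ℝ (⊤ : ℕ∞) (gamma0 ε) ∧ StrictMono (gamma0 ε) ∧
      (∃ M, ∀ x, |gamma0 ε x| ≤ M) ∧
      ∀ x, iteratedDeriv 3 (gamma0 ε) x ≤ (2 / 3) * deriv (gamma0 ε) x := by
  refine ⟨1/10, by norm_num, fun ε hε hε' => ?_⟩
  set c : ℝ := -((1 + ε) / 2) with hc
  set f : ℝ → ℝ := fun y => (1 + y ^ 2) ^ c with hf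
  have hderiv : deriv (gamma0 ε) = f := funext fun x => (g0_hasDerivAt hε x).deriv
  have hfpos : ∀ y, 0 < f y := fun y => Real.rpow_pos_of_pos (g0_base_pos y) _
  have hsmooth : ContDiff ℝ (⊤ : ℕ∞) (gamma0 ε) := by
    refine ContDiff.of_le ?_ le_top
    rw [contDiff_omega_iff_analyticOnNhd]
    intro x _
    exact analyticAt_primitive (g0_f_analytic ε x) (g0_hasDerivAt hε)
  refine ⟨hsmooth, ?_, ?_, ?_⟩
  · exact strictMono_of_deriv_pos fun x => by rw [hderiv]; exact hfpos x
  · refine ⟨1 + ∫ y, f y, fun x => ?_⟩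
    have h0 : 0 ≤ ∫ y in Set.Iic x, f y :=
      setIntegral_nonneg measurableSet_Iic fun y _ => (hfpos y).le
    have h1 : (∫ y in Set.Iic x, f y) ≤ ∫ y, f y :=
      setIntegral_le_integral (g0_integrable hε) (Filter.Eventually.of_forall fun y => (hfpos y).le)
    have h2 : gamma0 ε x = 1 + ∫ y in Set.Iic x, f y := rfl
    rw [h2, abs_of_nonneg (by linarith)]
    linarith
  · intro x
    have hd1 : deriv f = fun y => 2 * y * c * (1 + y ^ 2) ^ (c - 1) :=
      funext fun y => (g0_f_hasDerivAt ε y).deriv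
    have hd2 : deriv (fun y : ℝ => 2 * y * c * (1 + y ^ 2) ^ (c - 1)) x =
        2 * c * (1 + x ^ 2) ^ (c - 1)
          + 4 * x ^ 2 * c * (c - 1) * (1 + x ^ 2) ^ (c - 1 - 1) :=
      (g0_f1_hasDerivAt ε x).deriv
    have h3 : iteratedDeriv 3 (gamma0 ε) x =
        2 * c * (1 + x ^ 2) ^ (c - 1)
          + 4 * x ^ 2 * c * (c - 1) * (1 + x ^ 2) ^ (c - 1 - 1) := by
      have he : (3:ℕ) = 0 + 1 + 1 + 1 := rfl
      rw [iteratedDeriv_succ, iteratedDeriv_succ, iteratedDeriv_succ, iteratedDeriv_zero,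
        hderiv, hd1, hd2]
    rw [h3, hderiv]
    set t : ℝ := x ^ 2 with ht
    have hb : (0:ℝ) < 1 + t := g0_base_pos x
    have hA : (0:ℝ) < (1 + t) ^ (c - 1 - 1) := Real.rpow_pos_of_pos hb _
    have e1 : (1 + t) ^ (c - 1) = (1 + t) ^ (c - 1 - 1) * (1 + t) := by
      have h := Real.rpow_add hb (c - 1 - 1) 1
      rw [Real.rpow_one] at h
      rw [← h]
      congr 1
      ring
    have e2 : (1 + t) ^ c = (1 + t) ^ (c - 1 - 1) * (1 + t) ^ (2:ℕ) := by
      have h := Real.rpow_add hb (c - 1 - 1) ((2:ℕ):ℝ)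
      rw [Real.rpow_natCast] at h
      rw [← h]
      congr 1
      push_cast
      ring
    have ht0 : 0 ≤ t := sq_nonneg x
    have key : 2 * c * (1 + t) + 4 * t * c * (c - 1) ≤ 2 / 3 * (1 + t) ^ (2:ℕ) := by
      rw [hc]
      nlinarith [sq_nonneg (t - 2), sq_nonneg t, mul_nonneg ht0 hε.le,
        mul_nonneg (mul_nonneg ht0 ht0) hε.le, sq_nonneg (ε * t)]
    calc 2 * c * (1 + t) ^ (c - 1) + 4 * t * c * (c - 1) * (1 + t) ^ (c - 1 - 1)
        = (1 + t) ^ (c - 1 - 1) * (2 * c * (1 + t) + 4 * t * c * (c - 1)) := by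
          rw [e1]; ring
      _ ≤ (1 + t) ^ (c - 1 - 1) * (2 / 3 * (1 + t) ^ (2:ℕ)) :=
          mul_le_mul_of_nonneg_left key hA.le
      _ = 2 / 3 * (1 + t) ^ c := by rw [e2]; ring
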